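/- arXiv:2309.00593 — 7 statements merged into one kernel-verified Lean document; each statement's English description precedes it below -/
import Mathlib

section
/- In the group algebra $\mathbb{C}[D_m]$ of the dihedral group $D_m$, define $C = (-1)^m\big[(e + r_2 + t_2 + \cdots) - (r + t + r_3 + t_3 + \cdots)\big]$, i.e., $C = \sum_{i=0}^{m}(-1)^{m-i}(\text{sum of the elements of length } i)$ where $r_i = rtr\cdots$ ($i$ factors) and $t_i = trt\cdots$ ($i$ factors). Then for every integer $k$ with $1 \le k < m/2$, the element $C$ acts as zero on the representation $\rho_k$. -/
/-- Matrix of `r` in `ρ_k` w.r.t. the basis `(β_r, β_t)`. -/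
noncomputable def dihR (c : ℂ) : Matrix (Fin 2) (Fin 2) ℂ := !![-1, c; 0, 1]

/-- Matrix of `t` in `ρ_k` w.r.t. the basis `(β_r, β_t)`. -/
noncomputable def dihT (c : ℂ) : Matrix (Fin 2) (Fin 2) ℂ := !![1, 0; c, -1]

/-- `(dihWords R T i).1` is the image of `r_i = rtr⋯` (`i` factors) and `(dihWords R T i).2`
is the image of `t_i = trt⋯` (`i` factors) under the representation sending `r ↦ R`, `t ↦ T`. -/
noncomputable def dihWords (R T : Matrix (Fin 2) (Fin 2) ℂ) :
    ℕ → Matrix (Fin 2) (Fin 2) ℂ × Matrix (Fin 2) (Fin 2) ℂ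
  | 0 => (1, 1)
  | n + 1 => (R * (dihWords R T n).2, T * (dihWords R T n).1)

private lemma sin_rec (θ x : ℝ) :
    Real.sin ((x+1)*θ) + Real.sin ((x-1)*θ) = 2 * Real.cos θ * Real.sin (x*θ) := by
  have h1 : (x+1)*θ = x*θ + θ := by ring
  have h2 : (x-1)*θ = x*θ - θ := by ring
  rw [h1, h2, Real.sin_add, Real.sin_sub]; ring

private lemma words (θ : ℝ) (n : ℕ) :
    (Real.sin θ : ℂ) • (dihWords (dihR (2*(Real.cos θ:ℂ))) (dihT (2*(Real.cos θ:ℂ))) n).1 =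
      (if Even n
        then !![(Real.sin (((n:ℝ)+1)*θ) : ℂ), -(Real.sin ((n:ℝ)*θ):ℂ);
                (Real.sin ((n:ℝ)*θ):ℂ), -(Real.sin (((n:ℝ)-1)*θ):ℂ)]
        else !![-(Real.sin ((n:ℝ)*θ):ℂ), (Real.sin (((n:ℝ)+1)*θ):ℂ);
                -(Real.sin (((n:ℝ)-1)*θ):ℂ), (Real.sin ((n:ℝ)*θ):ℂ)]) ∧
    (Real.sin θ : ℂ) • (dihWords (dihR (2*(Real.cos θ:ℂ))) (dihT (2*(Real.cos θ:ℂ))) n).2 =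
      (if Even n
        then !![-(Real.sin (((n:ℝ)-1)*θ):ℂ), (Real.sin ((n:ℝ)*θ):ℂ);
                -(Real.sin ((n:ℝ)*θ):ℂ), (Real.sin (((n:ℝ)+1)*θ):ℂ)]
        else !![(Real.sin ((n:ℝ)*θ):ℂ), -(Real.sin (((n:ℝ)-1)*θ):ℂ);
                (Real.sin (((n:ℝ)+1)*θ):ℂ), -(Real.sin ((n:ℝ)*θ):ℂ)]) := by
  have hc1 : ∀ x : ℝ, (Real.sin ((x+1)*θ) : ℂ) + (Real.sin ((x-1)*θ):ℂ)
      = 2*(Real.cos θ:ℂ) * (Real.sin (x*θ):ℂ) := by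
    intro x
    exact_mod_cast congrArg Complex.ofReal (sin_rec θ x)
  induction n with
  | zero =>
      constructor <;>
      · simp only [dihWords, Nat.cast_zero, Even.zero, if_true, zero_mul, Real.sin_zero,
          zero_add, zero_sub, one_mul, neg_one_mul, Real.sin_neg]
        push_cast
        ext i j
        fin_cases i <;> fin_cases j <;>
          simp [Matrix.one_apply] <;> ring
  | succ n ih =>
      obtain ⟨ih1, ih2⟩ := ih
      have hr : (dihWords (dihR (2*(Real.cos θ:ℂ))) (dihT (2*(Real.cos θ:ℂ))) (n+1)).1
          = dihR (2*(Real.cos θ:ℂ)) * (dihWords (dihR (2*(Real.cos θ:ℂ))) (dihT (2*(Real.cos θ:ℂ))) n).2 := rfl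
      have ht : (dihWords (dihR (2*(Real.cos θ:ℂ))) (dihT (2*(Real.cos θ:ℂ))) (n+1)).2
          = dihT (2*(Real.cos θ:ℂ)) * (dihWords (dihR (2*(Real.cos θ:ℂ))) (dihT (2*(Real.cos θ:ℂ))) n).1 := rfl
      have h1 := hc1 (n:ℝ)
      have h2 := hc1 ((n:ℝ)+1)
      rw [show ((n:ℝ)+1-1) = (n:ℝ) by ring] at h2
      push_cast at h1 h2
      ring_nf at h1 h2
      by_cases he : Even n
      · rw [if_neg (by simp [Nat.even_add_one, he]), if_neg (by simp [Nat.even_add_one, he])]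
        rw [if_pos he] at ih1 ih2
        constructor
        · rw [hr, ← Matrix.mul_smul, ih2, dihR]
          ext i j
          fin_cases i <;> fin_cases j <;>
            · simp [Matrix.mul_apply, Fin.sum_univ_two, Nat.cast_add, Nat.cast_one,
                add_sub_cancel_right]
              try push_cast
              try ring_nf
              try simp only [Complex.sin_add, Complex.sin_sub, Complex.sin_two_mul,
                    Complex.cos_two_mul, show ((θ:ℂ)*2) = 2*(θ:ℂ) from mul_comm _ _]
              try ring1
        · rw [ht, ← Matrix.mul_smul, ih1, dihT]
          ext i j
          fin_cases i <;> fin_cases j <;>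
            · simp [Matrix.mul_apply, Fin.sum_univ_two, Nat.cast_add, Nat.cast_one,
                add_sub_cancel_right]
              try push_cast
              try ring_nf
              try simp only [Complex.sin_add, Complex.sin_sub, Complex.sin_two_mul,
                    Complex.cos_two_mul, show ((θ:ℂ)*2) = 2*(θ:ℂ) from mul_comm _ _]
              try ring1
      · rw [if_pos (Nat.even_add_one.mpr he), if_pos (Nat.even_add_one.mpr he)]
        rw [if_neg he] at ih1 ih2
        constructor
        · rw [hr, ← Matrix.mul_smul, ih2, dihR]
          ext i j
          fin_cases i <;> fin_cases j <;>
            · simp [Matrix.mul_apply, Fin.sum_univ_two, Nat.cast_add, Nat.cast_one,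
                add_sub_cancel_right]
              try push_cast
              try ring_nf
              try simp only [Complex.sin_add, Complex.sin_sub, Complex.sin_two_mul,
                    Complex.cos_two_mul, show ((θ:ℂ)*2) = 2*(θ:ℂ) from mul_comm _ _]
              try ring1
        · rw [ht, ← Matrix.mul_smul, ih1, dihT]
          ext i j
          fin_cases i <;> fin_cases j <;>
            · simp [Matrix.mul_apply, Fin.sum_univ_two, Nat.cast_add, Nat.cast_one,
                add_sub_cancel_right]
              try push_cast
              try ring_nf
              try simp only [Complex.sin_add, Complex.sin_sub, Complex.sin_two_mul,
                    Complex.cos_two_mul, show ((θ:ℂ)*2) = 2*(θ:ℂ) from mul_comm _ _]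
              try ring1

private lemma dihWords_swap (R T : Matrix (Fin 2) (Fin 2) ℂ) (n : ℕ) :
    dihWords T R n = ((dihWords R T n).2, (dihWords R T n).1) := by
  induction n with
  | zero => rfl
  | succ n ih => simp [dihWords, ih]

private lemma claim (R T : Matrix (Fin 2) (Fin 2) ℂ) (m : ℕ) (hm : 0 < m) :
    (-1:ℂ)^m • (1 : Matrix (Fin 2) (Fin 2) ℂ) + (dihWords R T m).1 +
      ∑ i ∈ Finset.Ico 1 m, (-1:ℂ)^(m-i) • ((dihWords R T i).1 + (dihWords R T i).2) =
    R * (∑ i ∈ Finset.range m, (-1:ℂ)^(m+1+i) • (dihWords R T i).2) -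
      ∑ i ∈ Finset.range m, (-1:ℂ)^(m+1+i) • (dihWords R T i).2 := by
  set W := dihWords R T with hW
  set S1 := ∑ i ∈ Finset.range m, (-1:ℂ)^(m+i) • (W i).1 with hS1
  set S2 := ∑ i ∈ Finset.range m, (-1:ℂ)^(m+i) • (W i).2 with hS2
  have key : ∀ i, R * (W i).2 = (W (i+1)).1 := fun i => rfl
  have hr : R * (∑ i ∈ Finset.range m, (-1:ℂ)^(m+1+i) • (W i).2)
      = S1 + (W m).1 - (-1:ℂ)^m • 1 := by
    rw [Finset.mul_sum]
    simp only [Matrix.mul_smul, key]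
    have e1 : ∑ i ∈ Finset.range m, (-1:ℂ)^(m+1+i) • (W (i+1)).1
        = ∑ i ∈ Finset.range m, (fun j => (-1:ℂ)^(m+j) • (W j).1) (i+1) := by
      refine Finset.sum_congr rfl fun i _ => ?_
      simp only
      congr 2
      omega
    rw [e1]
    have e2 := Finset.sum_range_succ' (fun j => (-1:ℂ)^(m+j) • (W j).1) m
    have e3 := Finset.sum_range_succ (fun j => (-1:ℂ)^(m+j) • (W j).1) m
    have e4 : ((-1:ℂ))^(m+m) • (W m).1 = (W m).1 := by
      rw [Even.neg_one_pow (⟨m, rfl⟩ : Even (m+m)), one_smul]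
    have e5 : ((-1:ℂ))^(m+0) • (W 0).1 = (-1:ℂ)^m • 1 := by
      norm_num [hW, dihWords]
    rw [e4] at e3
    rw [e5] at e2
    have : ∑ i ∈ Finset.range m, (-1:ℂ)^(m+(i+1)) • (W (i+1)).1
        = S1 + (W m).1 - (-1:ℂ)^m • 1 := by
      rw [eq_sub_iff_add_eq, ← e2, e3, hS1]
    simpa using this
  have ht : ∑ i ∈ Finset.range m, (-1:ℂ)^(m+1+i) • (W i).2 = -S2 := by
    rw [hS2, ← Finset.sum_neg_distrib]
    refine Finset.sum_congr rfl fun i _ => ?_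
    rw [show m+1+i = (m+i)+1 from by omega, pow_succ, mul_neg_one, neg_smul]
  have hsum12 : S1 + S2 = ∑ i ∈ Finset.range m, (-1:ℂ)^(m+i) • ((W i).1 + (W i).2) := by
    rw [hS1, hS2, ← Finset.sum_add_distrib]
    exact Finset.sum_congr rfl fun i _ => (smul_add _ _ _).symm
  have hIco : ∑ i ∈ Finset.Ico 1 m, (-1:ℂ)^(m-i) • ((W i).1 + (W i).2)
      = S1 + S2 - (-1:ℂ)^m • (1+1) := by
    rw [hsum12, Finset.range_eq_Ico, Finset.sum_eq_sum_Ico_succ_bot hm]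
    have e6 : ((-1:ℂ))^(m+0) • ((W 0).1 + (W 0).2) = (-1:ℂ)^m • ((1:Matrix (Fin 2) (Fin 2) ℂ)+1) := by
      norm_num [hW, dihWords]
    rw [e6]
    have e7 : ∑ i ∈ Finset.Ico 1 m, (-1:ℂ)^(m-i) • ((W i).1 + (W i).2)
        = ∑ i ∈ Finset.Ico (0+1) m, (-1:ℂ)^(m+i) • ((W i).1 + (W i).2) := by
      refine Finset.sum_congr (by norm_num) fun i hi => ?_
      have him : i ≤ m := le_of_lt (Finset.mem_Ico.mp hi).2
      congr 1
      have h2 : m + i = (m - i) + (i + i) := by omega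
      rw [h2, pow_add, Even.neg_one_pow (⟨i, rfl⟩ : Even (i+i)), mul_one]
    rw [e7]
    abel
  rw [hr, ht, hIco, smul_add]
  abel

/-- The image of `C = ∑_{i=0}^{m} (-1)^{m-i} (sum of the elements of length i)` of `ℂ[D_m]`
under the representation `r ↦ R`, `t ↦ T`: the length-`0` element is `e`, the elements of
length `i` for `1 ≤ i ≤ m-1` are `r_i` and `t_i`, and the unique element of length `m`
is `r_m = t_m`. -/
noncomputable def dihC (R T : Matrix (Fin 2) (Fin 2) ℂ) (m : ℕ) : Matrix (Fin 2) (Fin 2) ℂ :=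
  (-1 : ℂ) ^ m • (1 : Matrix (Fin 2) (Fin 2) ℂ) + (dihWords R T m).1 +
    ∑ i ∈ Finset.Ico 1 m, (-1 : ℂ) ^ (m - i) • ((dihWords R T i).1 + (dihWords R T i).2)

/-- For every `1 ≤ k < m/2`, the element `C` acts as zero on the representation `ρ_k`. -/
theorem C_acts_as_zero_on_rho_k (m k : ℕ) (hm : 2 ≤ m) (hk1 : 1 ≤ k) (hk2 : 2 * k < m)
    (c : ℂ) (hc : c = 2 * Real.cos (k * Real.pi / m)) :
    dihC (dihR c) (dihT c) m = 0 := by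
  have hm0 : 0 < m := by omega
  set θ : ℝ := (k:ℝ) * Real.pi / (m:ℝ) with hθ
  subst hc
  have hθpos : 0 < θ := by
    have hk : (0:ℝ) < k := by exact_mod_cast hk1
    have hmr : (0:ℝ) < m := by exact_mod_cast hm0
    rw [hθ]
    positivity
  have hθlt : θ < Real.pi := by
    rw [hθ, div_lt_iff₀ (by exact_mod_cast hm0)]
    have hk2' : ((k:ℝ)) < m := by exact_mod_cast (by omega : k < m)
    nlinarith [Real.pi_pos]
  have hs : Real.sin θ ≠ 0 := ne_of_gt (Real.sin_pos_of_pos_of_lt_pi hθpos hθlt)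
  have hmθ : (m:ℝ) * θ = k * Real.pi := by
    rw [hθ]
    field_simp
  have hsin_m : Real.sin ((m:ℝ)*θ) = 0 := by
    rw [hmθ]
    exact Real.sin_nat_mul_pi k
  have hsum : Real.sin (((m:ℝ)+1)*θ) = -Real.sin (((m:ℝ)-1)*θ) :=
    eq_neg_of_add_eq_zero_left (by rw [sin_rec θ m, hsin_m, mul_zero])
  set W := dihWords (dihR (2*(Real.cos θ:ℂ))) (dihT (2*(Real.cos θ:ℂ))) with hWdef
  have hrt : (W m).1 = (W m).2 := by
    obtain ⟨h1, h2⟩ := words θ m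
    have hcs : ((Real.sin θ : ℂ)) ≠ 0 := by exact_mod_cast hs
    apply smul_right_injective (Matrix (Fin 2) (Fin 2) ℂ) hcs
    show (Real.sin θ : ℂ) • (W m).1 = (Real.sin θ : ℂ) • (W m).2
    rw [hWdef, h1, h2]
    have hc0 : (Real.sin ((m:ℝ)*θ) : ℂ) = 0 := by rw [hsin_m]; norm_num
    have hc1 : (Real.sin (((m:ℝ)+1)*θ) : ℂ) = -(Real.sin (((m:ℝ)-1)*θ) : ℂ) := by
      rw [hsum]; push_cast; ring
    split_ifs <;> rw [hc0, hc1] <;> norm_num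
  have hA := claim (dihR (2*(Real.cos θ:ℂ))) (dihT (2*(Real.cos θ:ℂ))) m hm0
  have hB := claim (dihT (2*(Real.cos θ:ℂ))) (dihR (2*(Real.cos θ:ℂ))) m hm0
  simp only [dihWords_swap (dihR (2*(Real.cos θ:ℂ))) (dihT (2*(Real.cos θ:ℂ)))] at hB
  rw [← hWdef] at hA hB
  have hC1 : dihC (dihR (2*(Real.cos θ:ℂ))) (dihT (2*(Real.cos θ:ℂ))) m
      = dihR (2*(Real.cos θ:ℂ)) * (∑ i ∈ Finset.range m, (-1:ℂ)^(m+1+i) • (W i).2)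
        - ∑ i ∈ Finset.range m, (-1:ℂ)^(m+1+i) • (W i).2 := by
    rw [dihC, ← hWdef]
    exact hA
  have hC2 : dihC (dihR (2*(Real.cos θ:ℂ))) (dihT (2*(Real.cos θ:ℂ))) m
      = dihT (2*(Real.cos θ:ℂ)) * (∑ i ∈ Finset.range m, (-1:ℂ)^(m+1+i) • (W i).1)
        - ∑ i ∈ Finset.range m, (-1:ℂ)^(m+1+i) • (W i).1 := by
    rw [dihC, ← hWdef, hrt]
    rw [show (∑ i ∈ Finset.Ico 1 m, (-1:ℂ)^(m-i) • ((W i).1 + (W i).2))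
        = ∑ i ∈ Finset.Ico 1 m, (-1:ℂ)^(m-i) • ((W i).2 + (W i).1) from
      Finset.sum_congr rfl fun i _ => by rw [add_comm ((W i).1)]]
    exact hB
  ext i j
  fin_cases i
  · rw [hC2]
    simp only [Matrix.sub_apply, Matrix.mul_apply, Fin.sum_univ_two, Matrix.zero_apply, dihT,
      Matrix.cons_val', Matrix.cons_val_zero, Matrix.cons_val_one, Matrix.head_cons,
      Matrix.empty_val', Matrix.cons_val_fin_one, Matrix.head_fin_const, Fin.mk_zero, Fin.mk_one, Matrix.of_apply]
    ring
  · rw [hC1]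
    simp only [Matrix.sub_apply, Matrix.mul_apply, Fin.sum_univ_two, Matrix.zero_apply, dihR,
      Matrix.cons_val', Matrix.cons_val_zero, Matrix.cons_val_one, Matrix.head_cons,
      Matrix.empty_val', Matrix.cons_val_fin_one, Matrix.head_fin_const, Fin.mk_zero, Fin.mk_one, Matrix.of_apply]
    ring
end

section
/- Let $(V,\rho)$ be a complex representation of a Coxeter group $(W,S)$, and let $r,t \in S$ with $m_{rt} = 3$ (i.e., $rtr = trt$). Assume $V_r^- \cap V_t^- = 0$. Then for any $v \in V_r^-$, we have $rt\cdot v + v - t\cdot v = 0$, i.e., $rt \cdot v = t\cdot v - v$. -/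
/-- Let `(V,ρ)` be a complex representation of a Coxeter group `(W,S)` and let `r = s_i`,
`t = s_j` be simple reflections with `m_{rt} = 3` (so `rtr = trt`). Assume
`V_r⁻ ∩ V_t⁻ = 0`. Then every `v ∈ V_r⁻` satisfies `rt·v + v - t·v = 0`, i.e.
`rt·v = t·v - v`. -/
theorem rt_action_on_neg_eigenvector {B W V : Type*} [Group W]
    {M : CoxeterMatrix B} (cs : CoxeterSystem M W)
    [AddCommGroup V] [Module ℂ V] (ρ : Representation ℂ W V)
    (i j : B) (hm : M.M i j = 3)
    (hdisj : Module.End.eigenspace (ρ (cs.simple i)) (-1) ⊓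
      Module.End.eigenspace (ρ (cs.simple j)) (-1) = ⊥)
    (v : V) (hv : v ∈ Module.End.eigenspace (ρ (cs.simple i)) (-1)) :
    ρ (cs.simple i * cs.simple j) v + v - ρ (cs.simple j) v = 0 := by
  set r := cs.simple i with hr
  set t := cs.simple j with ht
  have hrr : r * r = 1 := cs.simple_mul_simple_self i
  have htt : t * t = 1 := cs.simple_mul_simple_self j
  have hpow : (r * t) ^ 3 = 1 := by rw [← hm]; exact cs.simple_mul_simple_pow i j
  have hbraid : r * t * r = t * r * t := by
    have h : r * t * r * (t * r * t) = 1 := by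
      have := hpow
      rw [pow_succ, pow_succ, pow_one] at this
      group at this ⊢
      convert this using 1
    calc r * t * r = r * t * r * (t * r * t) * (t * r * t)⁻¹ := by group
    _ = (t * r * t)⁻¹ := by rw [h]; group
    _ = t * r * t := by
        rw [mul_inv_rev, mul_inv_rev]
        rw [inv_eq_of_mul_eq_one_right hrr, inv_eq_of_mul_eq_one_right htt]
        group
  have hrv : ρ r v = -v := by
    have := Module.End.mem_eigenspace_iff.mp hv
    simpa using this
  set w := ρ (r * t) v + v - ρ t v with hw
  have hmemr : w ∈ Module.End.eigenspace (ρ r) (-1) := by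
    rw [Module.End.mem_eigenspace_iff]
    have h1 : ρ r (ρ (r * t) v) = ρ t v := by
      rw [← Module.End.mul_apply, ← map_mul, ← mul_assoc, hrr, one_mul]
    have h2 : ρ r (ρ t v) = ρ (r * t) v := by
      rw [← Module.End.mul_apply, ← map_mul]
    simp only [hw, map_sub, map_add, h1, h2, hrv]
    module
  have hmemt : w ∈ Module.End.eigenspace (ρ t) (-1) := by
    rw [Module.End.mem_eigenspace_iff]
    have h1 : ρ t (ρ (r * t) v) = -(ρ (r * t) v) := by
      rw [← Module.End.mul_apply, ← map_mul, ← mul_assoc, ← hbraid]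
      have : ρ (r * t * r) v = ρ (r * t) (ρ r v) := by
        rw [← Module.End.mul_apply, ← map_mul]
      rw [this, hrv, map_neg]
    have h2 : ρ t (ρ t v) = v := by
      rw [← Module.End.mul_apply, ← map_mul, htt, map_one]; rfl
    simp only [hw, map_sub, map_add, h1, h2]
    module
  have : w ∈ (⊥ : Submodule ℂ V) := hdisj ▸ ⟨hmemr, hmemt⟩
  simpa [hw] using this
end

section
/- Let $(V,\rho)$ be a complex representation of a Coxeter group $(W,S)$, and let $r,t \in S$ with $m_{rt} = 3$ and $V_r^- \cap V_t^- = 0$. Define $f_{tr} : V_r^- \to V_t^-$ by $f_{tr}(v) = t\cdot v - v$, and $f_{rt}: V_t^- \to V_r^-$ by $f_{rt}(v) = r \cdot v - v$. Then $f_{tr}$ and $f_{rt}$ are mutually inverse linear isomorphisms. -/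
/-- Let `(V,ρ)` be a complex representation of a Coxeter group `(W,S)` and let `r = s_i`,
`t = s_j` be simple reflections with `m_{rt} = 3` and `V_r⁻ ∩ V_t⁻ = 0`.
Define `f_{tr} : V_r⁻ → V_t⁻`, `v ↦ t·v - v` and `f_{rt} : V_t⁻ → V_r⁻`, `v ↦ r·v - v`.
Then `f_{tr}` and `f_{rt}` are well defined and are mutually inverse linear isomorphisms. -/
theorem f_tr_f_rt_mutually_inverse {B W V : Type*} [Group W]
    {M : CoxeterMatrix B} (cs : CoxeterSystem M W)
    [AddCommGroup V] [Module ℂ V] (ρ : Representation ℂ W V)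
    (i j : B) (hm : M.M i j = 3)
    (hdisj : Module.End.eigenspace (ρ (cs.simple i)) (-1) ⊓
      Module.End.eigenspace (ρ (cs.simple j)) (-1) = ⊥) :
    (∀ v ∈ Module.End.eigenspace (ρ (cs.simple i)) (-1),
        ρ (cs.simple j) v - v ∈ Module.End.eigenspace (ρ (cs.simple j)) (-1)) ∧
    (∀ v ∈ Module.End.eigenspace (ρ (cs.simple j)) (-1),
        ρ (cs.simple i) v - v ∈ Module.End.eigenspace (ρ (cs.simple i)) (-1)) ∧
    (∀ v ∈ Module.End.eigenspace (ρ (cs.simple i)) (-1),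
        ρ (cs.simple i) (ρ (cs.simple j) v - v) - (ρ (cs.simple j) v - v) = v) ∧
    (∀ v ∈ Module.End.eigenspace (ρ (cs.simple j)) (-1),
        ρ (cs.simple j) (ρ (cs.simple i) v - v) - (ρ (cs.simple i) v - v) = v) := by
  -- squares
  have hsq : ∀ (a : B) (v : V), ρ (cs.simple a) (ρ (cs.simple a) v) = v := by
    intro a v
    rw [← Module.End.mul_apply, ← map_mul, cs.simple_mul_simple_self, map_one,
      Module.End.one_apply]
  -- well-definedness (parts 1,2)
  have part1 : ∀ (b : B) (v : V),
      ρ (cs.simple b) v - v ∈ Module.End.eigenspace (ρ (cs.simple b)) (-1) := by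
    intro b v
    rw [Module.End.mem_eigenspace_iff, map_sub, hsq, neg_one_smul, neg_sub]
  -- braid relation in W
  have hbraid : cs.simple i * cs.simple j * cs.simple i
      = cs.simple j * cs.simple i * cs.simple j := by
    have h3 : (cs.simple i * cs.simple j) ^ 3 = 1 := by
      rw [← hm]; exact cs.simple_mul_simple_pow i j
    have e1 : (cs.simple i * cs.simple j * cs.simple i) *
        (cs.simple j * cs.simple i * cs.simple j) = 1 := by
      rw [show (cs.simple i * cs.simple j * cs.simple i) *
        (cs.simple j * cs.simple i * cs.simple j)
        = (cs.simple i * cs.simple j) ^ 3 from by simp [pow_succ, mul_assoc], h3]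
    have hinv : (cs.simple j * cs.simple i * cs.simple j)⁻¹
        = cs.simple j * cs.simple i * cs.simple j := by
      simp [mul_inv_rev, cs.inv_simple, mul_assoc]
    rw [← hinv]
    exact eq_inv_of_mul_eq_one_left e1
  -- braid relation on V, both orders
  have hbV : ∀ v : V, ρ (cs.simple i) (ρ (cs.simple j) (ρ (cs.simple i) v))
      = ρ (cs.simple j) (ρ (cs.simple i) (ρ (cs.simple j) v)) := by
    intro v
    rw [← Module.End.mul_apply, ← Module.End.mul_apply, ← map_mul, ← map_mul,
      ← Module.End.mul_apply, ← Module.End.mul_apply, ← map_mul, ← map_mul, hbraid]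
  -- the key computation, stated symmetrically
  have key : ∀ a b : B,
      (∀ v : V, ρ (cs.simple a) (ρ (cs.simple b) (ρ (cs.simple a) v))
        = ρ (cs.simple b) (ρ (cs.simple a) (ρ (cs.simple b) v))) →
      (Module.End.eigenspace (ρ (cs.simple a)) (-1) ⊓
        Module.End.eigenspace (ρ (cs.simple b)) (-1) = ⊥) →
      ∀ v ∈ Module.End.eigenspace (ρ (cs.simple a)) (-1),
        ρ (cs.simple a) (ρ (cs.simple b) v - v) - (ρ (cs.simple b) v - v) = v := by
    intro a b hb hd v hv
    set R := ρ (cs.simple a) with hR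
    set T := ρ (cs.simple b) with hT
    have hv' : R v = -v := by
      rw [Module.End.mem_eigenspace_iff] at hv
      rw [hv, neg_one_smul]
    set w : V := R (T v) - T v + v with hw
    have hwR : R w = -w := by
      rw [hw, map_add, map_sub, hsq, hv']
      abel
    have hwT : T w = -w := by
      have h1 : T (R (T v)) = R (T (R v)) := (hb v).symm
      rw [hw, map_add, map_sub, h1, hv', map_neg, map_neg, hsq]
      abel
    have hw0 : w = 0 := by
      have : w ∈ Module.End.eigenspace R (-1) ⊓ Module.End.eigenspace T (-1) :=
        Submodule.mem_inf.mpr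
          ⟨by rw [Module.End.mem_eigenspace_iff, neg_one_smul]; exact hwR,
           by rw [Module.End.mem_eigenspace_iff, neg_one_smul]; exact hwT⟩
      rw [hd] at this
      exact this
    have hRT : R (T v) = T v - v := by
      have := hw0
      rw [hw] at this
      linear_combination (norm := abel) this
    rw [map_sub, hRT, hv']
    abel
  refine ⟨fun v _ => part1 j v, fun v _ => part1 i v, key i j hbV hdisj, key j i ?_ ?_⟩
  · intro v; exact (hbV v).symm
  · rw [inf_comm]; exact hdisj
end

section
/- Let $(V,\rho)$ be an irreducible complex representation of an irreducible Coxeter group $(W,S)$ such that no two distinct generators $r,t \in S$ with $m_{rt} < \infty$ share a common eigenvector of eigenvalue $-1$. If $r,t \in S$ satisfy $m_{rt} = 3$, then $\dim V_r^- = \dim V_t^-$. -/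
lemma rank_neg_one_le_aux {W V : Type*} [Group W]
    [AddCommGroup V] [Module ℂ V] (ρ : Representation ℂ W V)
    (s t : W) (hs : s * s = 1) (ht : t * t = 1)
    (hbraid : s * t * s = t * s * t) :
    Module.rank ℂ (Module.End.eigenspace (ρ s) (-1)) ≤
      Module.rank ℂ (Module.End.eigenspace (ρ t) (-1)) := by
  set Es := Module.End.eigenspace (ρ s) (-1)
  set Et := Module.End.eigenspace (ρ t) (-1)
  have hmem : ∀ v : V, ρ t v - v ∈ Et := by
    intro v
    rw [Module.End.mem_eigenspace_iff]
    have : ρ t (ρ t v) = v := by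
      rw [← Module.End.mul_apply, ← map_mul, ht, map_one, Module.End.one_apply]
    simp [map_sub, this]
  let f : Es →ₗ[ℂ] Et :=
    LinearMap.codRestrict Et ((ρ t - 1) ∘ₗ Es.subtype) (fun x => by
      simpa using hmem x.1)
  have hinj : Function.Injective f := by
    rw [injective_iff_map_eq_zero]
    intro x hx
    have hx' : ρ t x.1 - x.1 = 0 := congrArg Subtype.val hx
    have htx : ρ t x.1 = x.1 := by linear_combination (norm := module) hx'
    have hsx : ρ s x.1 = -x.1 := by
      have := x.2
      rw [Module.End.mem_eigenspace_iff] at this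
      simpa using this
    have h1 : ρ (s * t * s) x.1 = x.1 := by
      simp [map_mul, Module.End.mul_apply, hsx, htx, map_neg]
    have h2 : ρ (t * s * t) x.1 = -x.1 := by
      simp [map_mul, Module.End.mul_apply, hsx, htx, map_neg]
    rw [hbraid, h2] at h1
    have : x.1 = 0 := by
      have h2x : (2 : ℂ) • x.1 = 0 := by linear_combination (norm := module) -h1
      have := smul_eq_zero.mp h2x
      simpa using this
    exact Subtype.ext this
  exact LinearMap.rank_le_of_injective f hinj

/-- Let `(W,S)` be an irreducible Coxeter group (connected Coxeter graph, whose edges join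
`i ≠ j` with `m_{ij} ≠ 2`, including `m_{ij} = ∞`, encoded as `M.M i j = 0`).
Let `(V,ρ)` be an irreducible complex representation such that no two distinct generators
`r, t` with `m_{rt} < ∞` share a common eigenvector of eigenvalue `-1`.
If `m_{ij} = 3`, then `dim V_{s_i}⁻ = dim V_{s_j}⁻`. -/
theorem rank_neg_one_eigenspaces_eq {B W V : Type*} [Group W]
    {M : CoxeterMatrix B} (cs : CoxeterSystem M W)
    [AddCommGroup V] [Module ℂ V] (ρ : Representation ℂ W V)
    (hconn : (SimpleGraph.fromRel (fun a b => M.M a b ≠ 2)).Connected)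
    (hirr : ∀ U : Submodule ℂ V, (∀ (w : W), ∀ v ∈ U, ρ w v ∈ U) → U = ⊥ ∨ U = ⊤)
    (hdisj : ∀ a b : B, a ≠ b → M.M a b ≠ 0 →
      Module.End.eigenspace (ρ (cs.simple a)) (-1) ⊓
        Module.End.eigenspace (ρ (cs.simple b)) (-1) = ⊥)
    (i j : B) (hm : M.M i j = 3) :
    Module.rank ℂ (Module.End.eigenspace (ρ (cs.simple i)) (-1)) =
      Module.rank ℂ (Module.End.eigenspace (ρ (cs.simple j)) (-1)) := by
  set s := cs.simple i
  set t := cs.simple j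
  have hs : s * s = 1 := cs.simple_mul_simple_self i
  have ht : t * t = 1 := cs.simple_mul_simple_self j
  have hpow : (s * t) ^ 3 = 1 := by
    have := cs.simple_mul_simple_pow i j
    rwa [hm] at this
  have hbraid : s * t * s = t * s * t := by
    have hsinv : s⁻¹ = s := inv_eq_of_mul_eq_one_right hs
    have htinv : t⁻¹ = t := inv_eq_of_mul_eq_one_right ht
    have h3 : s * t * s * (t * s * t) = 1 := by
      rw [show s * t * s * (t * s * t) = (s * t) ^ 3 by rw [pow_succ, pow_succ, pow_one]; group]
      exact hpow
    have := eq_inv_of_mul_eq_one_right h3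
    rw [this, mul_inv_rev, mul_inv_rev, hsinv, htinv, mul_assoc]
  exact le_antisymm
    (rank_neg_one_le_aux ρ s t hs ht hbraid)
    (rank_neg_one_le_aux ρ t s ht hs hbraid.symm)
end

section
/- Let $(W,S)$ be an irreducible simply laced Coxeter group (every $m_{st} \in \{2,3\}$ for $s \ne t$) whose Coxeter graph is a tree, and suppose $(V,\rho)$ is an irreducible complex representation with $V_r^- \cap V_t^- = 0$ for all distinct $r,t \in S$, and $V_s^- \ne 0$ for some $s \in S$. Fix $s_0 \in S$, $0 \ne \alpha_{s_0} \in V_{s_0}^-$, and for each $s \in S$ with unique path $(s_0,s_1,\dots,s_k=s)$ in the graph define $\alpha_s = f_{s_k s_{k-1}}\cdots f_{s_1 s_0}(\alpha_{s_0})$ where $f_{tr}(v) = t\cdot v - v$. Then for any $s,t \in S$ with $m_{st} = 3$, we have $t\cdot \alpha_s = \alpha_s + \alpha_t$. -/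
/-- Fold the maps `f_{tr} : v ↦ t·v - v` along a walk in the Coxeter graph: for a walk
`(s_0, s_1, …, s_k)`, this computes `f_{s_k s_{k-1}} ∘ ⋯ ∘ f_{s_1 s_0}`. -/
noncomputable def foldF {B W V : Type*} [Group W] [AddCommGroup V] [Module ℂ V]
    (σ : B → W) (ρ : Representation ℂ W V) {G : SimpleGraph B} :
    ∀ {a b : B}, G.Walk a b → V → V
  | _, _, SimpleGraph.Walk.nil => fun v => v
  | _, _, @SimpleGraph.Walk.cons _ _ _ c _ h p => fun v => foldF σ ρ p (ρ (σ c) v - v)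

lemma foldF_concat {B W V : Type*} [Group W] [AddCommGroup V] [Module ℂ V]
    (σ : B → W) (ρ : Representation ℂ W V) {G : SimpleGraph B} {a b c : B}
    (p : G.Walk a b) (h : G.Adj b c) (v : V) :
    foldF σ ρ (p.concat h) v = ρ (σ c) (foldF σ ρ p v) - foldF σ ρ p v := by
  induction p generalizing v with
  | nil => rfl
  | cons h' p ih =>
    simp only [SimpleGraph.Walk.concat_cons, foldF]
    exact ih _ _

lemma rep_simple_sq {B W V : Type*} [Group W] [AddCommGroup V] [Module ℂ V]
    {M : CoxeterMatrix B} (cs : CoxeterSystem M W) (ρ : Representation ℂ W V)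
    (c : B) (v : V) : ρ (cs.simple c) (ρ (cs.simple c) v) = v := by
  have : ρ (cs.simple c * cs.simple c) v = ρ 1 v := by
    rw [cs.simple_mul_simple_self]
  rw [map_mul, map_one] at this
  simpa using this

lemma foldF_eigen {B W V : Type*} [Group W] [AddCommGroup V] [Module ℂ V]
    {M : CoxeterMatrix B} (cs : CoxeterSystem M W) (ρ : Representation ℂ W V)
    {G : SimpleGraph B} {a b : B} (p : G.Walk a b) (v : V)
    (hv : ρ (cs.simple a) v = -v) :
    ρ (cs.simple b) (foldF cs.simple ρ p v) = -(foldF cs.simple ρ p v) := by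
  induction p generalizing v with
  | nil => exact hv
  | @cons a c _ h p ih =>
    simp only [foldF]
    apply ih
    rw [map_sub, rep_simple_sq cs ρ]
    abel

/-- Let `(W,S)` be an irreducible simply laced Coxeter group whose Coxeter graph `G`
(edges join `a ≠ b` with `m_{ab} = 3`) is a tree, and let `(V,ρ)` be an irreducible complex
representation with `V_r⁻ ∩ V_t⁻ = 0` for all distinct `r,t ∈ S` and `V_s⁻ ≠ 0` for some
`s ∈ S`. Fix `s₀ ∈ S` and `0 ≠ α₀ ∈ V_{s₀}⁻`, and for each `s ∈ S` define
`α_s = f_{s_k s_{k-1}} ⋯ f_{s_1 s_0}(α₀)` along the unique path `(s₀, s_1, …, s_k = s)`.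
Then for any `s, t ∈ S` with `m_{st} = 3`, we have `t·α_s = α_s + α_t`. -/
theorem alpha_edge_relation {B W V : Type*} [Group W]
    {M : CoxeterMatrix B} (cs : CoxeterSystem M W)
    [AddCommGroup V] [Module ℂ V] (ρ : Representation ℂ W V)
    (hsl : ∀ a b : B, a ≠ b → M.M a b = 2 ∨ M.M a b = 3)
    (G : SimpleGraph B) (hG : ∀ a b : B, G.Adj a b ↔ M.M a b = 3)
    (htree : G.IsTree)
    (hirr : ∀ U : Submodule ℂ V, (∀ (w : W), ∀ v ∈ U, ρ w v ∈ U) → U = ⊥ ∨ U = ⊤)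
    (hdisj : ∀ a b : B, a ≠ b →
      Module.End.eigenspace (ρ (cs.simple a)) (-1) ⊓
        Module.End.eigenspace (ρ (cs.simple b)) (-1) = ⊥)
    (hne : ∃ s : B, Module.End.eigenspace (ρ (cs.simple s)) (-1) ≠ ⊥)
    (s₀ : B) (α₀ : V) (hα₀ : α₀ ≠ 0) (hα₀mem : ρ (cs.simple s₀) α₀ = -α₀)
    (α : B → V)
    (hα : ∀ (b : B) (p : G.Walk s₀ b), p.IsPath → α b = foldF cs.simple ρ p α₀) :
    ∀ a b : B, M.M a b = 3 → ρ (cs.simple b) (α a) = α a + α b := by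
  classical
  intro a b hab
  have hadj : G.Adj a b := (hG a b).2 hab
  have hne' : a ≠ b := hadj.ne
  obtain ⟨p, hp, -⟩ := htree.existsUnique_path s₀ a
  by_cases hb : b ∈ p.support
  · -- path to a passes through b; last edge of p is b-a
    have hq : (p.takeUntil b hb).IsPath := hp.takeUntil hb
    have hr : (p.dropUntil b hb).IsPath := hp.dropUntil hb
    have hr' : ((SimpleGraph.Walk.nil : G.Walk a a).cons hadj.symm).IsPath := by
      simp [SimpleGraph.Walk.isPath_def, hne'.symm]
    have hreq : p.dropUntil b hb = (SimpleGraph.Walk.nil : G.Walk a a).cons hadj.symm :=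
      (htree.existsUnique_path b a).unique hr hr'
    have hpeq : p = (p.takeUntil b hb).concat hadj.symm := by
      rw [SimpleGraph.Walk.concat_eq_append, ← hreq, SimpleGraph.Walk.take_spec]
    set x := foldF cs.simple ρ (p.takeUntil b hb) α₀ with hx
    have hαb : α b = x := hα b _ hq
    have hαa : α a = ρ (cs.simple a) x - x := by
      rw [hα a p hp]; conv_lhs => rw [hpeq]
      rw [foldF_concat]
    have hbx : ρ (cs.simple b) x = -x := foldF_eigen cs ρ _ _ hα₀mem
    -- braid relation
    have hbraid : cs.simple a * cs.simple b * cs.simple a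
        = cs.simple b * cs.simple a * cs.simple b := by
      have h3 : (cs.simple a * cs.simple b) ^ M.M a b = 1 := cs.simple_mul_simple_pow a b
      rw [hab] at h3
      have key : (cs.simple a * cs.simple b * cs.simple a) * (cs.simple b * cs.simple a *
          cs.simple b) = 1 := by
        rw [show (cs.simple a * cs.simple b * cs.simple a) * (cs.simple b * cs.simple a *
          cs.simple b) = (cs.simple a * cs.simple b) ^ 3 by
            rw [pow_succ, pow_succ, pow_one]; simp [mul_assoc]]
        exact h3
      have := eq_inv_of_mul_eq_one_left key
      rw [this]
      simp [mul_assoc]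
    have braid : ρ (cs.simple a) (ρ (cs.simple b) (ρ (cs.simple a) x)) =
        ρ (cs.simple b) (ρ (cs.simple a) (ρ (cs.simple b) x)) := by
      have h1 : ρ (cs.simple a * cs.simple b * cs.simple a) x
          = ρ (cs.simple b * cs.simple a * cs.simple b) x := by rw [hbraid]
      simpa [map_mul, Module.End.mul_apply] using h1
    set z := ρ (cs.simple b) (ρ (cs.simple a) x) - ρ (cs.simple a) x + x with hz
    have hza : ρ (cs.simple a) z = -z := by
      have e1 : ρ (cs.simple a) z = ρ (cs.simple a) (ρ (cs.simple b) (ρ (cs.simple a) x))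
          - ρ (cs.simple a) (ρ (cs.simple a) x) + ρ (cs.simple a) x := by
        rw [hz, map_add, map_sub]
      rw [e1, braid, rep_simple_sq cs ρ, hbx, map_neg, map_neg, hz]
      abel
    have hzb : ρ (cs.simple b) z = -z := by
      rw [hz, map_add, map_sub, rep_simple_sq cs ρ, hbx]
      abel
    have hz0 : z = 0 := by
      have hmem : z ∈ Module.End.eigenspace (ρ (cs.simple a)) (-1) ⊓
          Module.End.eigenspace (ρ (cs.simple b)) (-1) := by
        constructor
        · exact Module.End.mem_eigenspace_iff.2 (by rw [neg_one_smul]; exact hza)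
        · exact Module.End.mem_eigenspace_iff.2 (by rw [neg_one_smul]; exact hzb)
      rw [hdisj a b hne'] at hmem
      exact hmem
    have hy : ρ (cs.simple b) (ρ (cs.simple a) x) = ρ (cs.simple a) x - x := by
      have := hz0
      rw [hz] at this
      linear_combination (norm := abel) this
    rw [hαa, hαb, map_sub, hy, hbx]
    abel
  · -- extend p by the edge a-b to get the path to b
    have hq : (p.concat hadj).IsPath := by
      rw [← SimpleGraph.Walk.isPath_reverse_iff, SimpleGraph.Walk.reverse_concat]
      exact (hp.reverse).cons (by simpa using hb)
    have hαb : α b = ρ (cs.simple b) (α a) - α a := by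
      rw [hα b _ hq, foldF_concat, ← hα a p hp]
    rw [hαb]
    abel
end

section
/- Let $(W,S)$ be an irreducible simply laced Coxeter group whose Coxeter graph is a tree, and $(V,\rho)$ an irreducible nontrivial complex representation such that $V_r^-\cap V_t^-=0$ for all distinct $r,t\in S$. Then $\dim V_s^- = 1$ for every $s \in S$, and in particular $\dim V \le |S|$. -/
universe uB uV

private def walkProd {B : Type*} {M : Type*} [Monoid M] {G : SimpleGraph B} (f : B → M) :
    ∀ {x y : B}, G.Walk x y → M
  | _, _, SimpleGraph.Walk.nil => 1
  | _, _, @SimpleGraph.Walk.cons _ _ a b _ _ p => walkProd f p * (f a * f b)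

private theorem walkProd_nil {B M : Type*} [Monoid M] {G : SimpleGraph B} (f : B → M) (x : B) :
    walkProd f (SimpleGraph.Walk.nil : G.Walk x x) = 1 := rfl

private theorem walkProd_cons {B M : Type*} [Monoid M] {G : SimpleGraph B} (f : B → M)
    {a b c : B} (h : G.Adj a b) (p : G.Walk b c) :
    walkProd f (SimpleGraph.Walk.cons h p) = walkProd f p * (f a * f b) := rfl

private theorem walkProd_append {B M : Type*} [Monoid M] {G : SimpleGraph B} (f : B → M)
    {a b c : B} (p : G.Walk a b) (q : G.Walk b c) :
    walkProd f (p.append q) = walkProd f q * walkProd f p := by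
  induction p with
  | nil => simp [walkProd_nil]
  | cons h p ih =>
      rw [SimpleGraph.Walk.cons_append, walkProd_cons, walkProd_cons, ih, mul_assoc]

/-- Let `(W,S)` be an irreducible simply laced Coxeter group whose Coxeter graph (edges join
`a ≠ b` with `m_{ab} = 3`) is a tree, and let `(V,ρ)` be an irreducible nontrivial complex
representation such that `V_r⁻ ∩ V_t⁻ = 0` for all distinct `r,t ∈ S`. Then
`dim V_s⁻ = 1` for every `s ∈ S`, and in particular `dim V ≤ |S|`. -/
theorem neg_one_eigenspaces_one_dimensional {B : Type uB} {W : Type*} {V : Type uV} [Group W]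
    {M : CoxeterMatrix B} (cs : CoxeterSystem M W)
    [AddCommGroup V] [Module ℂ V] (ρ : Representation ℂ W V)
    (hsl : ∀ a b : B, a ≠ b → M.M a b = 2 ∨ M.M a b = 3)
    (G : SimpleGraph B) (hG : ∀ a b : B, G.Adj a b ↔ M.M a b = 3)
    (htree : G.IsTree)
    (hirr : ∀ U : Submodule ℂ V, (∀ (w : W), ∀ v ∈ U, ρ w v ∈ U) → U = ⊥ ∨ U = ⊤)
    (hnontriv : ∃ (a : B) (v : V), ρ (cs.simple a) v ≠ v)
    (hdisj : ∀ a b : B, a ≠ b →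
      Module.End.eigenspace (ρ (cs.simple a)) (-1) ⊓
        Module.End.eigenspace (ρ (cs.simple b)) (-1) = ⊥) :
    (∀ a : B, Module.rank ℂ (Module.End.eigenspace (ρ (cs.simple a)) (-1)) = 1) ∧
    Cardinal.lift.{uB} (Module.rank ℂ V) ≤ Cardinal.lift.{uV} (Cardinal.mk B) := by
  classical
  obtain ⟨a₀, u₀, hu₀⟩ := hnontriv
  set E : B → Submodule ℂ V := fun b => Module.End.eigenspace (ρ (cs.simple b)) (-1) with hE
  set r : B → Module.End ℂ V := fun b => ρ (cs.simple b) with hr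
  have hmem : ∀ (b : B) (v : V), v ∈ E b ↔ r b v = -v := by
    intro b v
    simp [hE, hr, Module.End.mem_eigenspace_iff]
  have hsq : ∀ (b : B) (v : V), r b (r b v) = v := by
    intro b v
    rw [hr, ← Module.End.mul_apply, ← map_mul, cs.simple_mul_simple_self, map_one,
      Module.End.one_apply]
  have happ : ∀ (x y z : W) (v : V), ρ (x * y * z) v = ρ x (ρ y (ρ z v)) := by
    intro x y z v
    simp [map_mul]
  -- group-level relations
  have g2 : ∀ a b : B, M.M a b = 2 →
      cs.simple a * cs.simple b * cs.simple a = cs.simple b := by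
    intro a b h
    have h2 := cs.simple_mul_simple_pow a b
    rw [h, pow_two] at h2
    have hc : cs.simple a * cs.simple b = cs.simple b * cs.simple a := by
      have h3 := mul_eq_one_iff_eq_inv.mp h2
      rwa [mul_inv_rev, cs.inv_simple, cs.inv_simple] at h3
    rw [hc, mul_assoc, cs.simple_mul_simple_self, mul_one]
  have g3 : ∀ a b : B, M.M a b = 3 →
      cs.simple a * cs.simple b * cs.simple a = cs.simple b * cs.simple a * cs.simple b := by
    intro a b h
    have h2 := cs.simple_mul_simple_pow a b
    rw [h, show (3 : ℕ) = 2 + 1 from rfl, pow_succ, pow_two] at h2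
    have key : (cs.simple a * cs.simple b * cs.simple a) *
        (cs.simple b * cs.simple a * cs.simple b) = 1 := by
      simp only [mul_assoc] at h2 ⊢
      exact h2
    have h3 := mul_eq_one_iff_eq_inv.mp key
    simp only [mul_inv_rev, cs.inv_simple] at h3
    rwa [← mul_assoc] at h3
  -- operator versions
  have hop2 : ∀ a b : B, M.M a b = 2 → ∀ v : V, r a (r b (r a v)) = r b v := by
    intro a b h v
    have := congrArg (fun w : W => ρ w v) (g2 a b h)
    simpa [happ, hr] using this
  have hop3 : ∀ a b : B, M.M a b = 3 → ∀ v : V, r a (r b (r a v)) = r b (r a (r b v)) := by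
    intro a b h v
    have := congrArg (fun w : W => ρ w v) (g3 a b h)
    simpa [happ, hr] using this
  have hAdj3 : ∀ a b : B, G.Adj a b → M.M a b = 3 := fun a b h => (hG a b).mp h
  -- key identity 1 : commuting generators act trivially on each other's eigenspaces
  have he2 : ∀ a b : B, a ≠ b → ¬ G.Adj a b → ∀ v ∈ E b, r a v = v := by
    intro a b hne hnadj v hv
    have hm2 : M.M a b = 2 := (hsl a b hne).resolve_right (fun h => hnadj ((hG a b).mpr h))
    have hb : r b v = -v := (hmem b v).mp hv
    have hba : r b (r a v) = r a (r b v) := by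
      have h0 := hop2 a b hm2 (r a v)
      rw [hsq] at h0
      exact h0.symm
    have h1 : r a (v - r a v) = -(v - r a v) := by
      rw [map_sub, hsq]
      abel
    have h2 : r b (v - r a v) = -(v - r a v) := by
      rw [map_sub, hb, hba, hb, map_neg]
      abel
    have hz : v - r a v ∈ E a ⊓ E b := ⟨(hmem a _).mpr h1, (hmem b _).mpr h2⟩
    rw [hdisj a b hne] at hz
    have hz0 : v - r a v = 0 := by simpa using hz
    exact (sub_eq_zero.mp hz0).symm
  -- key identity 2 : for adjacent a b, `r b (r a v)` is in `E a` for `v ∈ E b`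
  have he3m : ∀ a b : B, G.Adj a b → ∀ v ∈ E b, r b (r a v) ∈ E a := by
    intro a b hadj v hv
    have hb : r b v = -v := (hmem b v).mp hv
    refine (hmem a _).mpr ?_
    rw [hop3 a b (hAdj3 a b hadj), hb, map_neg, map_neg]
  -- key identity 3 : for adjacent a b and `v ∈ E b`, `r a v = v + r b (r a v)`
  have he3e : ∀ a b : B, G.Adj a b → ∀ v ∈ E b, r a v = v + r b (r a v) := by
    intro a b hadj v hv
    have hm3 := hAdj3 a b hadj
    have hb : r b v = -v := (hmem b v).mp hv
    have h1 : r a (v - r a v + r b (r a v)) = -(v - r a v + r b (r a v)) := by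
      rw [map_add, map_sub, hsq, hop3 a b hm3, hb, map_neg, map_neg]
      abel
    have h2 : r b (v - r a v + r b (r a v)) = -(v - r a v + r b (r a v)) := by
      rw [map_add, map_sub, hsq, hb]
      abel
    have hz : v - r a v + r b (r a v) ∈ E a ⊓ E b := ⟨(hmem a _).mpr h1, (hmem b _).mpr h2⟩
    rw [hdisj a b hadj.ne] at hz
    have hz0 : v - r a v + r b (r a v) = 0 := by simpa using hz
    have : r a v - (v + r b (r a v)) = -(v - r a v + r b (r a v)) := by abel
    rw [hz0, neg_zero] at this
    exact sub_eq_zero.mp this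
  -- choose the tree paths from `a₀`
  choose p hp hpu using fun b => htree.existsUnique_path a₀ b
  -- the seed vector
  set v₀ : V := u₀ - r a₀ u₀ with hv₀
  have hv₀ne : v₀ ≠ 0 := by
    intro h
    rw [hv₀] at h
    exact hu₀ ((sub_eq_zero.mp h).symm)
  have hv₀mem : v₀ ∈ E a₀ := by
    refine (hmem a₀ _).mpr ?_
    rw [hv₀, map_sub, hsq]
    abel
  -- the distinguished vectors
  set vf : B → V := fun b => walkProd r (p b) v₀ with hvf
  have hwmem : ∀ {x y : B} (q : G.Walk x y), ∀ v : V, v ∈ E x → (walkProd r q) v ∈ E y := by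
    intro x y q
    induction q with
    | nil => intro v hv; simpa [walkProd_nil] using hv
    | cons h q ih =>
        intro v hv
        rw [walkProd_cons, Module.End.mul_apply, Module.End.mul_apply]
        exact ih _ (he3m _ _ h.symm v hv)
  have hinj : ∀ (c : B) (w : V), r c w = 0 → w = 0 := by
    intro c w hw
    have := congrArg (r c) hw
    rwa [hsq, map_zero] at this
  have hwinj : ∀ {x y : B} (q : G.Walk x y), ∀ v : V, (walkProd r q) v = 0 → v = 0 := by
    intro x y q
    induction q with
    | nil => intro v hv; simpa [walkProd_nil] using hv
    | cons h q ih =>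
        intro v hv
        rw [walkProd_cons, Module.End.mul_apply, Module.End.mul_apply] at hv
        exact hinj _ _ (hinj _ _ (ih _ hv))
  have hvmem : ∀ b : B, vf b ∈ E b := fun b => hwmem (p b) v₀ hv₀mem
  have hvne : ∀ b : B, vf b ≠ 0 := fun b h => hv₀ne (hwinj (p b) v₀ h)
  have hva₀ : vf a₀ = v₀ := by
    have hnil : (SimpleGraph.Walk.nil : G.Walk a₀ a₀) = p a₀ :=
      hpu a₀ SimpleGraph.Walk.nil SimpleGraph.Walk.IsPath.nil
    show walkProd r (p a₀) v₀ = v₀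
    rw [← hnil, walkProd_nil, Module.End.one_apply]
  -- the edge relation
  have hedge : ∀ a b : B, G.Adj a b → r b (r a (vf b)) = vf a := by
    intro a b hab
    by_cases hs : a ∈ (p b).support
    · -- `a` lies on the path to `b`
      have hq : ((p b).takeUntil a hs).IsPath := (hp b).takeUntil hs
      have hd : ((p b).dropUntil a hs).IsPath := (hp b).dropUntil hs
      have hsingle : (SimpleGraph.Walk.cons hab SimpleGraph.Walk.nil : G.Walk a b).IsPath := by
        refine SimpleGraph.Walk.IsPath.nil.cons ?_
        simp [hab.ne]
      have hdeq : (p b).dropUntil a hs = SimpleGraph.Walk.cons hab SimpleGraph.Walk.nil :=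
        (htree.existsUnique_path a b).unique hd hsingle
      have hqeq : (p b).takeUntil a hs = p a := hpu a _ hq
      have hsplit : ((p b).takeUntil a hs).append ((p b).dropUntil a hs) = p b :=
        (p b).take_spec hs
      have : vf b = r a (r b (vf a)) := by
        show walkProd r (p b) v₀ = r a (r b (walkProd r (p a) v₀))
        rw [← hsplit, walkProd_append, hdeq, hqeq, walkProd_cons, walkProd_nil, one_mul]
        simp [Module.End.mul_apply]
      rw [this, hsq, hsq]
    · -- `a` extends the path to `b`
      have hcp : ((p b).concat hab.symm).IsPath := by
        rw [← SimpleGraph.Walk.isPath_reverse_iff, SimpleGraph.Walk.reverse_concat]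
        refine (hp b).reverse.cons ?_
        rw [SimpleGraph.Walk.support_reverse, List.mem_reverse]
        exact hs
      have hpeq : (p b).concat hab.symm = p a := hpu a _ hcp
      have : vf a = r b (r a (vf b)) := by
        show walkProd r (p a) v₀ = r b (r a (walkProd r (p b) v₀))
        rw [← hpeq, SimpleGraph.Walk.concat_eq_append, walkProd_append, walkProd_cons,
          walkProd_nil, one_mul]
        simp [Module.End.mul_apply]
      rw [this]
  -- the span of the distinguished vectors
  set U : Submodule ℂ V := Submodule.span ℂ (Set.range vf) with hU
  have hUgen : ∀ b : B, vf b ∈ U := fun b => Submodule.subset_span ⟨b, rfl⟩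
  have hstep : ∀ c : B, ∀ v ∈ U, r c v ∈ U := by
    intro c
    have hgen : ∀ b : B, r c (vf b) ∈ U := by
      intro b
      by_cases hcb : c = b
      · subst hcb
        have := (hmem c _).mp (hvmem c)
        rw [this]
        exact neg_mem (hUgen c)
      · by_cases hadj : G.Adj c b
        · rw [he3e c b hadj _ (hvmem b), hedge c b hadj]
          exact add_mem (hUgen b) (hUgen c)
        · rw [he2 c b hcb hadj _ (hvmem b)]
          exact hUgen b
    have hle : U ≤ Submodule.comap (r c) U := by
      rw [hU]
      refine Submodule.span_le.mpr ?_
      rintro _ ⟨b, rfl⟩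
      exact hgen b
    exact fun v hv => hle hv
  have hWinv : ∀ (w : W), ∀ v ∈ U, ρ w v ∈ U := by
    have hword : ∀ (l : List B), ∀ v ∈ U, ρ (cs.wordProd l) v ∈ U := by
      intro l
      induction l with
      | nil => intro v hv; simpa [cs.wordProd_nil] using hv
      | cons a l ih =>
          intro v hv
          rw [cs.wordProd_cons, map_mul, Module.End.mul_apply]
          exact hstep a _ (ih v hv)
    intro w v hv
    obtain ⟨l, rfl⟩ := cs.wordProd_surjective w
    exact hword l v hv
  have hUtop : U = ⊤ := by
    refine (hirr U hWinv).resolve_left ?_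
    intro h
    have := hUgen a₀
    rw [h, Submodule.mem_bot] at this
    exact hvne a₀ this
  -- every element of `E a` is a multiple of `vf a`
  have hkey : ∀ a : B, ∀ x ∈ E a, ∃ t : ℂ, t • vf a = x := by
    intro a x hx
    have hxU : x ∈ U := hUtop ▸ Submodule.mem_top
    have himg : ∀ v ∈ U, v - r a v ∈ (ℂ ∙ vf a) := by
      have hle : U ≤ Submodule.comap (LinearMap.id - r a) (ℂ ∙ vf a) := by
        rw [hU]
        refine Submodule.span_le.mpr ?_
        rintro _ ⟨b, rfl⟩
        simp only [SetLike.mem_coe, Submodule.mem_comap, LinearMap.sub_apply, LinearMap.id_apply]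
        by_cases hab : a = b
        · subst hab
          have := (hmem a _).mp (hvmem a)
          rw [this, sub_neg_eq_add, ← two_smul ℂ (vf a)]
          exact Submodule.smul_mem _ _ (Submodule.mem_span_singleton_self _)
        · by_cases hadj : G.Adj a b
          · rw [he3e a b hadj _ (hvmem b), hedge a b hadj]
            have : vf b - (vf b + vf a) = (-1 : ℂ) • vf a := by
              rw [neg_smul, one_smul]; abel
            rw [this]
            exact Submodule.smul_mem _ _ (Submodule.mem_span_singleton_self _)
          · rw [he2 a b hab hadj _ (hvmem b), sub_self]
            exact Submodule.zero_mem _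
      intro v hv
      have := hle hv
      simpa using this
    have h2x : (2 : ℂ) • x ∈ (ℂ ∙ vf a) := by
      have := himg x hxU
      rw [(hmem a x).mp hx, sub_neg_eq_add, ← two_smul ℂ x] at this
      exact this
    obtain ⟨t, ht⟩ := Submodule.mem_span_singleton.mp h2x
    refine ⟨t / 2, ?_⟩
    have h2 : ((2 : ℂ)⁻¹ * 2) • x = x := by norm_num
    calc (t / 2) • vf a = (2 : ℂ)⁻¹ • (t • vf a) := by
          rw [smul_smul]; ring_nf
      _ = (2 : ℂ)⁻¹ • ((2 : ℂ) • x) := by rw [ht]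
      _ = x := by rw [smul_smul]; exact h2
  constructor
  · intro a
    show Module.rank ℂ (E a) = 1
    rw [rank_eq_one_iff]
    refine ⟨⟨vf a, hvmem a⟩, ?_, ?_⟩
    · intro h
      exact hvne a (congrArg Subtype.val h)
    · rintro ⟨x, hx⟩
      obtain ⟨t, ht⟩ := hkey a x hx
      exact ⟨t, Subtype.ext (by simpa using ht)⟩
  · have h1 : Module.rank ℂ V = Module.rank ℂ U := by
      rw [hUtop]
      exact (rank_top ℂ V).symm
    have h2 : Module.rank ℂ U ≤ Cardinal.mk (Set.range vf) := by
      rw [hU]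
      exact rank_span_le _
    calc Cardinal.lift.{uB} (Module.rank ℂ V)
        ≤ Cardinal.lift.{uB} (Cardinal.mk (Set.range vf)) := by
          rw [h1]; exact Cardinal.lift_le.mpr h2
      _ ≤ Cardinal.lift.{uV} (Cardinal.mk B) := Cardinal.mk_range_le_lift
end

section
/- Let $(W,S)$ be an irreducible simply laced Coxeter group whose Coxeter graph has exactly one cycle with vertices $s_0,s_1,\dots,s_n$ as above, and let $x \in \mathbb{C}^\times$. On the vector space $\tilde{V}_x = \bigoplus_{s\in S}\mathbb{C}\alpha_s$, define for each $s \in S$: $s\cdot\alpha_s = -\alpha_s$; $s_0\cdot\alpha_{s_n} = \alpha_{s_n} + x\alpha_{s_0}$ and $s_n\cdot\alpha_{s_0} = \alpha_{s_0} + x^{-1}\alpha_{s_n}$; for all other pairs $s\ne t$, $s\cdot\alpha_t = \alpha_t$ if $m_{st}=2$ and $s\cdot\alpha_t = \alpha_t + \alpha_s$ if $m_{st}=3$. Then these formulas define a representation of $W$ on $\tilde{V}_x$, i.e., the linear maps satisfy the Coxeter relations $(\rho(s)\rho(t))^{m_{st}} = \mathrm{id}$ for all $s,t \in S$. -/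
/-!
Each generator acts by a reflection `v ↦ v - ⟨v, α_s^∨⟩ α_s` fixing the hyperplane of the
coroot `α_s^∨` with `⟨α_t, α_s^∨⟩ = 2, -1, 0` for `t = s`, `m_{st} = 3`, `m_{st} = 2`, except
that the edge `s_0 s_n` of the cycle carries the entries `-x` and `-x⁻¹`. For two reflections
`r, r'` with `⟨α, α^∨⟩ = ⟨α', α'^∨⟩ = 2`, the product `r r'` has order dividing `2` when both
cross pairings vanish and dividing `3` when `⟨α', α^∨⟩⟨α, α'^∨⟩ = 1`; the twist by `x` cancels in
the product `(-x)(-x⁻¹) = 1`.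
-/

open scoped Classical in
/-- The image of the basis vector `α_t` under the action of the generator `s` in the
representation `ρ̃_x` of the paper: `s·α_s = -α_s`; `s_0·α_{s_n} = α_{s_n} + x α_{s_0}`;
`s_n·α_{s_0} = α_{s_0} + x⁻¹ α_{s_n}`; for all other pairs `s ≠ t`, `s·α_t = α_t` if
`m_{st} = 2` and `s·α_t = α_t + α_s` if `m_{st} = 3`. Here `s0 := s_0` and `sn := s_n`
are the two distinguished endpoints of the cycle. -/
noncomputable def cycleRepVec {B : Type*} (M : CoxeterMatrix B) (s0 sn : B) (x : ℂ)
    (s t : B) : B →₀ ℂ :=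
  if t = s then -Finsupp.single s 1
  else if s = s0 ∧ t = sn then Finsupp.single t 1 + x • Finsupp.single s 1
  else if s = sn ∧ t = s0 then Finsupp.single t 1 + x⁻¹ • Finsupp.single s 1
  else if M.M s t = 3 then Finsupp.single t 1 + Finsupp.single s 1
  else Finsupp.single t 1

/-- The linear endomorphism of `Ṽ_x = ⨁_{s ∈ S} ℂ α_s` by which the generator `s` acts. -/
noncomputable def cycleRepMap {B : Type*} (M : CoxeterMatrix B) (s0 sn : B) (x : ℂ)
    (s : B) : (B →₀ ℂ) →ₗ[ℂ] (B →₀ ℂ) :=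
  Finsupp.lsum ℂ (fun t => LinearMap.toSpanSingleton ℂ (B →₀ ℂ) (cycleRepVec M s0 sn x s t))

namespace Module

variable {R M : Type*} [CommRing R] [AddCommGroup M] [Module R M] {x y : M} {f g : Dual R M}

theorem preReflection_mul_self (hf : f x = 2) :
    preReflection x f * preReflection x f = 1 :=
  LinearMap.ext (involutive_preReflection hf)

theorem preReflection_mul_preReflection_sq (hf : f x = 2) (hg : g y = 2) (hfy : f y = 0)
    (hgx : g x = 0) : (preReflection x f * preReflection y g) ^ 2 = 1 := by
  ext z
  simp only [pow_two, End.mul_apply, End.one_apply, preReflection_apply, map_sub,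
    map_smul, hf, hg, hfy, hgx]
  module

theorem preReflection_mul_preReflection_pow_three (hf : f x = 2) (hg : g y = 2)
    (h : f y * g x = 1) : (preReflection x f * preReflection y g) ^ 3 = 1 := by
  ext z
  simp only [pow_succ, pow_zero, one_mul, End.mul_apply, End.one_apply,
    preReflection_apply, map_sub, map_smul, hf, hg]
  match_scalars
  · ring
  · linear_combination (g z * f y * (f y * g x - 2) - f z * (f y * g x - 1)) * h
  · linear_combination (f z * g x - g z * (f y * g x - 1)) * h

end Module

section CycleRep

variable {B : Type*} (M : CoxeterMatrix B) (s0 sn : B) (x : ℂ)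

open scoped Classical in
noncomputable def cycleCartan (s t : B) : ℂ :=
  if t = s then 2
  else if s = s0 ∧ t = sn then -x
  else if s = sn ∧ t = s0 then -x⁻¹
  else if M.M s t = 3 then -1
  else 0

noncomputable def cycleCoroot (s : B) : Module.Dual ℂ (B →₀ ℂ) :=
  Finsupp.linearCombination ℂ (cycleCartan M s0 sn x s)

@[simp]
theorem cycleCoroot_single (s t : B) :
    cycleCoroot M s0 sn x s (Finsupp.single t 1) = cycleCartan M s0 sn x s t := by
  simp [cycleCoroot]

theorem cycleCartan_self (s : B) : cycleCartan M s0 sn x s s = 2 := by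
  simp [cycleCartan]

theorem cycleRepMap_eq_preReflection (s : B) :
    cycleRepMap M s0 sn x s =
      Module.preReflection (Finsupp.single s 1) (cycleCoroot M s0 sn x s) := by
  ext t : 2
  simp only [LinearMap.comp_apply, Finsupp.lsingle_apply, cycleRepMap, Finsupp.lsum_single,
    LinearMap.toSpanSingleton_apply, one_smul, Module.preReflection_apply, cycleCoroot_single]
  unfold cycleRepVec cycleCartan
  split_ifs <;> simp_all [two_smul]

variable {M s0 sn x}

theorem cycleCartan_eq_zero (hcyc : M.M s0 sn = 3) {s t : B} (h : M.M s t = 2) :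
    cycleCartan M s0 sn x s t = 0 := by
  have hts : t ≠ s := by rintro rfl; simp at h
  unfold cycleCartan
  rw [if_neg hts, if_neg, if_neg, if_neg (by omega)]
  · rintro ⟨rfl, rfl⟩; rw [M.symmetric] at h; omega
  · rintro ⟨rfl, rfl⟩; omega

theorem cycleCartan_mul_cycleCartan (hx : x ≠ 0) {s t : B} (h : M.M s t = 3) :
    cycleCartan M s0 sn x s t * cycleCartan M s0 sn x t s = 1 := by
  have hts : t ≠ s := by rintro rfl; simp at h
  unfold cycleCartan
  rw [if_neg hts, if_neg hts.symm]
  split_ifs <;> simp_all [M.symmetric t s]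

end CycleRep

theorem cycleRep_well_defined_general {B : Type*}
    {M : CoxeterMatrix B}
    (hsl : ∀ a b : B, a ≠ b → M.M a b = 2 ∨ M.M a b = 3)
    (c : ℕ → B) (n : ℕ)
    (hcyc0 : M.M (c 0) (c n) = 3)
    (x : ℂ) (hx : x ≠ 0) :
    ∀ s t : B,
      (cycleRepMap M (c 0) (c n) x s * cycleRepMap M (c 0) (c n) x t) ^ (M.M s t) = 1 := by
  intro s t
  simp only [cycleRepMap_eq_preReflection]
  have hroot (u : B) : cycleCoroot M (c 0) (c n) x u (Finsupp.single u 1) = 2 := by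
    rw [cycleCoroot_single, cycleCartan_self]
  rcases eq_or_ne s t with rfl | hst
  · rw [M.diagonal, pow_one]
    exact Module.preReflection_mul_self (hroot s)
  rcases hsl s t hst with h | h <;> rw [h]
  · refine Module.preReflection_mul_preReflection_sq (hroot s) (hroot t) ?_ ?_
    · rw [cycleCoroot_single, cycleCartan_eq_zero hcyc0 h]
    · rw [cycleCoroot_single, cycleCartan_eq_zero hcyc0 (M.symmetric s t ▸ h)]
  · refine Module.preReflection_mul_preReflection_pow_three (hroot s) (hroot t) ?_
    simp only [cycleCoroot_single, cycleCartan_mul_cycleCartan hx h]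

/-- Let `(W,S)` be an irreducible simply laced Coxeter group whose Coxeter graph has exactly
one cycle, with cycle vertices `s_0, s_1, …, s_n` (`m_{s_i s_{i+1}} = 3`, `m_{s_0 s_n} = 3`),
and let `x ∈ ℂ^×`. Then the formulas above define a representation of `W` on
`Ṽ_x = ⨁_{s ∈ S} ℂ α_s`: the assigned linear maps satisfy the Coxeter relations
`(ρ(s)ρ(t))^{m_{st}} = id` for all `s,t ∈ S`. -/
theorem cycleRep_well_defined {B W : Type*} [Group W]
    {M : CoxeterMatrix B} (cs : CoxeterSystem M W)
    (hsl : ∀ a b : B, a ≠ b → M.M a b = 2 ∨ M.M a b = 3)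
    (G : SimpleGraph B) (hG : ∀ a b : B, G.Adj a b ↔ M.M a b = 3)
    (hconn : G.Connected)
    (c : ℕ → B) (n : ℕ) (hn : 2 ≤ n)
    (hinj : ∀ i j : ℕ, i ≤ n → j ≤ n → c i = c j → i = j)
    (hcyc : ∀ i : ℕ, i < n → M.M (c i) (c (i + 1)) = 3)
    (hcyc0 : M.M (c 0) (c n) = 3)
    (honly : ∀ (a : B) (p : G.Walk a a), p.IsCycle → ∀ e ∈ p.edges,
      (∃ i : ℕ, i < n ∧ e = s(c i, c (i + 1))) ∨ e = s(c 0, c n))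
    (x : ℂ) (hx : x ≠ 0) :
    ∀ s t : B,
      (cycleRepMap M (c 0) (c n) x s * cycleRepMap M (c 0) (c n) x t) ^ (M.M s t) = 1 :=
  cycleRep_well_defined_general hsl c n hcyc0 x hx
end
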